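/- arXiv:1910.13874 — 2 statements merged into one kernel-verified Lean document; each statement's English description precedes it below -/
import Mathlib

section
/- Let n = |V| and let W₁ denote the total number of walks of length 1 in G. If 0 < α < 1/(n³ + n), then G has a vertex cover of size k if and only if there exists a group S ⊆ V with |S| = k and GED(S) ≥ α·W₁. -/
open scoped BigOperators

/-- `p : Fin (i+1) → V` is a walk of length `i` in `G`:
a sequence of `i+1` vertices in which consecutive vertices are adjacent. -/
def SimpleGraph.IsWalkFun {V : Type*} (G : SimpleGraph V) (i : ℕ) (p : Fin (i + 1) → V) : Prop :=
  ∀ j : Fin i, G.Adj (p j.castSucc) (p j.succ)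

instance {V : Type*} (G : SimpleGraph V) [DecidableRel G.Adj] (i : ℕ) :
    DecidablePred (G.IsWalkFun i) := fun p =>
  decidable_of_iff (∀ j : Fin i, G.Adj (p j.castSucc) (p j.succ)) Iff.rfl

/-- `φ_i(S)`: the number of walks of length `i` in `G` containing at least one vertex of `S`. -/
def SimpleGraph.phiCount {V : Type*} [Fintype V] [DecidableEq V] (G : SimpleGraph V)
    [DecidableRel G.Adj] (i : ℕ) (S : Finset V) : ℕ :=
  (Finset.univ.filter fun p : Fin (i + 1) → V => G.IsWalkFun i p ∧ ∃ j, p j ∈ S).card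

/-- The total number of walks of length `i` in `G`. -/
def SimpleGraph.walkCount {V : Type*} [Fintype V] [DecidableEq V] (G : SimpleGraph V)
    [DecidableRel G.Adj] (i : ℕ) : ℕ :=
  (Finset.univ.filter fun p : Fin (i + 1) → V => G.IsWalkFun i p).card

/-- `φ^miss_i(v, S)`: the number of walks of length `i` ending at `v` containing no vertex of `S`. -/
def SimpleGraph.missCount {V : Type*} [Fintype V] [DecidableEq V] (G : SimpleGraph V)
    [DecidableRel G.Adj] (i : ℕ) (v : V) (S : Finset V) : ℕ :=
  (Finset.univ.filter fun p : Fin (i + 1) → V =>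
    G.IsWalkFun i p ∧ p (Fin.last i) = v ∧ ∀ j, p j ∉ S).card

/-- `φ^hit_i(v, S)`: the number of walks of length `i` ending at `v` containing at least one
vertex of `S`. -/
def SimpleGraph.hitCount {V : Type*} [Fintype V] [DecidableEq V] (G : SimpleGraph V)
    [DecidableRel G.Adj] (i : ℕ) (v : V) (S : Finset V) : ℕ :=
  (Finset.univ.filter fun p : Fin (i + 1) → V =>
    G.IsWalkFun i p ∧ p (Fin.last i) = v ∧ ∃ j, p j ∈ S).card

/-- `s_j(x, S)`: the number of walks of length `j` starting at `x` containing no vertex of `S`. -/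
def SimpleGraph.startMissCount {V : Type*} [Fintype V] [DecidableEq V] (G : SimpleGraph V)
    [DecidableRel G.Adj] (j : ℕ) (x : V) (S : Finset V) : ℕ :=
  (Finset.univ.filter fun p : Fin (j + 1) → V =>
    G.IsWalkFun j p ∧ p 0 = x ∧ ∀ l, p l ∉ S).card

/-- `σ_max`: the largest singular value of the adjacency matrix of `G`,
i.e. its ℓ²→ℓ² operator norm. -/
noncomputable def SimpleGraph.sigmaMax {V : Type*} [Fintype V] [DecidableEq V]
    (G : SimpleGraph V) [DecidableRel G.Adj] : ℝ :=
  ‖Matrix.toEuclideanCLM (𝕜 := ℝ) (G.adjMatrix ℝ)‖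

/-- `ω_i(x) = Σ_z (A^i)_{xz}`: the number of walks of length `i` starting at `x`. -/
noncomputable def SimpleGraph.omegaCount {V : Type*} [Fintype V] [DecidableEq V]
    (G : SimpleGraph V) [DecidableRel G.Adj] (i : ℕ) (x : V) : ℝ :=
  ∑ z : V, (G.adjMatrix ℝ ^ i) x z

/-- `GED(S) = Σ_{i=1}^∞ α^i φ_i(S)`. -/
noncomputable def SimpleGraph.GED {V : Type*} [Fintype V] [DecidableEq V] (G : SimpleGraph V)
    [DecidableRel G.Adj] (α : ℝ) (S : Finset V) : ℝ :=
  ∑' i : ℕ, α ^ (i + 1) * (G.phiCount (i + 1) S : ℝ)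

/-- `GED_{≤ℓ}(S) = Σ_{i=1}^ℓ α^i φ_i(S)`. -/
noncomputable def SimpleGraph.GEDle {V : Type*} [Fintype V] [DecidableEq V] (G : SimpleGraph V)
    [DecidableRel G.Adj] (α : ℝ) (ℓ : ℕ) (S : Finset V) : ℝ :=
  ∑ i ∈ Finset.range ℓ, α ^ (i + 1) * (G.phiCount (i + 1) S : ℝ)

/-- `GED_{>ℓ}(S) = Σ_{i=ℓ+1}^∞ α^i φ_i(S)`. -/
noncomputable def SimpleGraph.GEDtail {V : Type*} [Fintype V] [DecidableEq V] (G : SimpleGraph V)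
    [DecidableRel G.Adj] (α : ℝ) (ℓ : ℕ) (S : Finset V) : ℝ :=
  ∑' i : ℕ, α ^ (ℓ + 1 + i) * (G.phiCount (ℓ + 1 + i) S : ℝ)

/-- `KC(x) = Σ_{i=1}^∞ α^i ω_i(x)`: Katz centrality of `x`. -/
noncomputable def SimpleGraph.katz {V : Type*} [Fintype V] [DecidableEq V] (G : SimpleGraph V)
    [DecidableRel G.Adj] (α : ℝ) (x : V) : ℝ :=
  ∑' i : ℕ, α ^ (i + 1) * G.omegaCount (i + 1) x
section AuxLemmas

/-!
Only walks of length one matter: `GED(S) = α φ₁(S) + GED_{>1}(S)`, and since `φ_i(S) ≤ n^{i+1}`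
the tail is at most `α² n³ / (1 - α n)`, which is `< α` exactly when `α (n³ + n) < 1`.
On the other hand `φ₁(S) ≤ W₁` with equality iff `S` is a vertex cover, since an uncovered edge
`uv` is a walk of length one avoiding `S`. Hence `GED(S) ≥ α W₁` iff `S` is a vertex cover.
-/

lemma mul_lt_one_of_mul_pow_three_add_lt_one {α x : ℝ} (hα : 0 ≤ α) (hx : 0 ≤ x)
    (h : α * (x ^ 3 + x) < 1) : α * x < 1 := by
  nlinarith [mul_nonneg hα (pow_nonneg hx 3)]

namespace SimpleGraph

variable {V : Type*} [Fintype V] [DecidableEq V] (G : SimpleGraph V) [DecidableRel G.Adj]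

lemma phiCount_le_card_pow (i : ℕ) (S : Finset V) :
    G.phiCount i S ≤ Fintype.card V ^ (i + 1) :=
  (Finset.card_filter_le _ _).trans_eq (by simp)

lemma phiCount_le_walkCount (i : ℕ) (S : Finset V) : G.phiCount i S ≤ G.walkCount i :=
  Finset.card_le_card <| Finset.monotone_filter_right _ fun _ _ h => h.1

lemma phiCount_one_eq_walkCount_iff (S : Finset V) :
    G.phiCount 1 S = G.walkCount 1 ↔ G.IsVertexCover S := by
  constructor
  · intro h u v huv
    by_contra hmiss
    obtain ⟨hu, hv⟩ := not_or.1 hmiss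
    have hwalk : G.IsWalkFun 1 ![u, v] := by
      intro j
      fin_cases j
      simpa using huv
    have hsub := Finset.eq_of_subset_of_card_le
      (Finset.monotone_filter_right _ fun _ _ h => h.1) (h.ge : G.walkCount 1 ≤ G.phiCount 1 S)
    have hmem : ![u, v] ∈ Finset.univ.filter fun p : Fin 2 → V =>
        G.IsWalkFun 1 p ∧ ∃ j, p j ∈ S := by
      rw [hsub]
      simpa using hwalk
    obtain ⟨-, j, hj⟩ := (Finset.mem_filter.1 hmem).2
    fin_cases j
    exacts [hu hj, hv hj]
  · intro hS
    refine congrArg Finset.card (Finset.filter_congr fun p _ => ?_)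
    refine ⟨And.left, fun hp => ⟨hp, ?_⟩⟩
    rcases hS (hp 0) with h | h
    exacts [⟨0, h⟩, ⟨1, h⟩]

variable {G}

lemma pow_mul_phiCount_le {α : ℝ} (hα : 0 ≤ α) (i : ℕ) (S : Finset V) :
    α ^ i * (G.phiCount i S : ℝ) ≤ Fintype.card V * (α * Fintype.card V) ^ i := by
  calc α ^ i * (G.phiCount i S : ℝ) ≤ α ^ i * (Fintype.card V : ℝ) ^ (i + 1) := by
        gcongr
        exact_mod_cast G.phiCount_le_card_pow i S
    _ = _ := by ring

lemma summable_pow_mul_phiCount {α : ℝ} (hα : 0 ≤ α) (hαn : α * Fintype.card V < 1)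
    (S : Finset V) : Summable fun i : ℕ => α ^ i * (G.phiCount i S : ℝ) :=
  .of_nonneg_of_le (fun _ => by positivity) (fun i => pow_mul_phiCount_le hα i S)
    ((summable_geometric_of_lt_one (by positivity) hαn).mul_left _)

lemma GED_eq_GEDle_add_GEDtail {α : ℝ} (hα : 0 ≤ α) (hαn : α * Fintype.card V < 1)
    (ℓ : ℕ) (S : Finset V) : G.GED α S = G.GEDle α ℓ S + G.GEDtail α ℓ S := by
  have hsum := (summable_nat_add_iff 1).2 (summable_pow_mul_phiCount (G := G) hα hαn S)
  rw [GED, GEDle, GEDtail, ← hsum.sum_add_tsum_nat_add ℓ]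
  congr 2 with i
  rw [show i + ℓ + 1 = ℓ + 1 + i by omega]

lemma GEDle_one (α : ℝ) (S : Finset V) : G.GEDle α 1 S = α * G.phiCount 1 S := by
  simp [GEDle]

lemma GEDtail_nonneg {α : ℝ} (hα : 0 ≤ α) (ℓ : ℕ) (S : Finset V) : 0 ≤ G.GEDtail α ℓ S :=
  tsum_nonneg fun _ => by positivity

lemma GEDtail_le {α : ℝ} (hα : 0 ≤ α) (hαn : α * Fintype.card V < 1) (ℓ : ℕ) (S : Finset V) :
    G.GEDtail α ℓ S ≤
      Fintype.card V * (α * Fintype.card V) ^ (ℓ + 1) / (1 - α * Fintype.card V) := by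
  set n : ℝ := (Fintype.card V : ℝ)
  have hbound (i : ℕ) : α ^ (ℓ + 1 + i) * (G.phiCount (ℓ + 1 + i) S : ℝ) ≤
      n * (α * n) ^ (ℓ + 1) * (α * n) ^ i := by
    rw [mul_assoc, ← pow_add]
    exact pow_mul_phiCount_le hα _ S
  have hgeom := summable_geometric_of_lt_one (by positivity) hαn
  calc G.GEDtail α ℓ S ≤ ∑' i : ℕ, n * (α * n) ^ (ℓ + 1) * (α * n) ^ i :=
        Summable.tsum_le_tsum hbound
          (.of_nonneg_of_le (fun _ => by positivity) hbound (hgeom.mul_left _))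
          (hgeom.mul_left _)
    _ = _ := by rw [tsum_mul_left, tsum_geometric_of_lt_one (by positivity) hαn, div_eq_mul_inv]

lemma GEDtail_one_lt {α : ℝ} (hα : 0 < α) (hαn : α * (Fintype.card V ^ 3 + Fintype.card V) < 1)
    (S : Finset V) : G.GEDtail α 1 S < α := by
  set n : ℝ := (Fintype.card V : ℝ)
  have hn := mul_lt_one_of_mul_pow_three_add_lt_one hα.le (Nat.cast_nonneg _) hαn
  calc G.GEDtail α 1 S ≤ n * (α * n) ^ 2 / (1 - α * n) := GEDtail_le hα.le hn 1 S
    _ < α := by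
      rw [div_lt_iff₀ (by linarith)]
      nlinarith

lemma GED_ge_iff_isVertexCover {α : ℝ} (hα : 0 < α)
    (hαn : α * (Fintype.card V ^ 3 + Fintype.card V) < 1) (S : Finset V) :
    α * G.walkCount 1 ≤ G.GED α S ↔ G.IsVertexCover S := by
  have hn := mul_lt_one_of_mul_pow_three_add_lt_one hα.le (Nat.cast_nonneg _) hαn
  rw [GED_eq_GEDle_add_GEDtail hα.le hn 1, GEDle_one, ← phiCount_one_eq_walkCount_iff]
  constructor
  · intro h
    by_contra hne
    have hlt : G.phiCount 1 S < G.walkCount 1 := (G.phiCount_le_walkCount 1 S).lt_of_ne hne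
    have hltR : (G.phiCount 1 S : ℝ) + 1 ≤ G.walkCount 1 := by exact_mod_cast hlt
    nlinarith [GEDtail_one_lt (G := G) hα hαn S]
  · intro h
    rw [h]
    linarith [GEDtail_nonneg (G := G) hα.le 1 S]

end SimpleGraph

theorem vertexCover_iff_ged_ge_general {V : Type*} [Fintype V] [DecidableEq V]
    (G : SimpleGraph V) [DecidableRel G.Adj] (k : ℕ) (α : ℝ) (hα : 0 < α)
    (hα' : α < 1 / ((Fintype.card V : ℝ) ^ 3 + Fintype.card V)) :
    (∃ S : Finset V, S.card = k ∧ ∀ u v : V, G.Adj u v → u ∈ S ∨ v ∈ S) ↔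
      (∃ S : Finset V, S.card = k ∧ G.GED α S ≥ α * (G.walkCount 1 : ℝ)) := by
  have hpos : (0 : ℝ) < (Fintype.card V : ℝ) ^ 3 + Fintype.card V :=
    one_div_pos.1 (hα.trans hα')
  have hαn := (lt_div_iff₀ hpos).1 hα'
  refine exists_congr fun S => and_congr_right fun _ => ?_
  rw [ge_iff_le, SimpleGraph.GED_ge_iff_isVertexCover hα hαn S]
  rfl

/-- For `0 < α < 1/(n³+n)`, `G` has a vertex cover of size `k` iff there is a
group `S` with `|S| = k` and `GED(S) ≥ α·W₁`, where `W₁` is the number of walks of length 1. -/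
theorem vertexCover_iff_ged_ge {V : Type*} [Fintype V] [DecidableEq V] [Nonempty V]
    (G : SimpleGraph V) [DecidableRel G.Adj] (k : ℕ) (α : ℝ) (hα : 0 < α)
    (hα' : α < 1 / ((Fintype.card V : ℝ) ^ 3 + Fintype.card V)) :
    (∃ S : Finset V, S.card = k ∧ ∀ u v : V, G.Adj u v → u ∈ S ∨ v ∈ S) ↔
      (∃ S : Finset V, S.card = k ∧ G.GED α S ≥ α * (G.walkCount 1 : ℝ)) :=
  vertexCover_iff_ged_ge_general G k α hα hα'
end AuxLemmas
end

section
/- Combinatorial tail bound: if deg_max denotes the maximum vertex degree of G and α·deg_max < 1 with α > 0, then for every ℓ ≥ 1, GED_{>ℓ}(V) ≤ α^{ℓ+1} · (deg_max / (1 − α·deg_max)) · Σ_{x∈V} ω_ℓ(x). -/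
open scoped BigOperators

/-!
Every walk meets `V`, so `φ_i(V)` is the number of all walks of length `i`, which is
`Σ_x ω_i(x)`. Splitting off the first step of a walk gives `ω_{i+1}(x) = Σ_{u ~ x} ω_i(u)`, hence
`ω_{i+1}(x) ≤ Δ · ω_i(x)` by induction and `ω_{ℓ+1+n}(x) ≤ Δ^{n+1} ω_ℓ(x)`. The terms of the tail
are therefore dominated by `α^{ℓ+1} Δ (αΔ)^n Σ_x ω_ℓ(x)`, a geometric series of ratio `αΔ < 1`.
-/

open Finset

theorem tsum_le_div_one_sub_of_le_geometric {f : ℕ → ℝ} {C r : ℝ} (hf₀ : ∀ n, 0 ≤ f n)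
    (hf : ∀ n, f n ≤ C * r ^ n) (hr₀ : 0 ≤ r) (hr₁ : r < 1) : ∑' n, f n ≤ C / (1 - r) := by
  have hg := (hasSum_geometric_of_lt_one hr₀ hr₁).mul_left C
  exact hasSum_le hf (Summable.of_nonneg_of_le hf₀ hf hg.summable).hasSum hg

namespace SimpleGraph

variable {V : Type*} (G : SimpleGraph V)

theorem isWalkFun_cons {i : ℕ} (x : V) (q : Fin (i + 1) → V) :
    G.IsWalkFun (i + 1) (Fin.cons x q) ↔ G.Adj x (q 0) ∧ G.IsWalkFun i q := by
  simp [IsWalkFun, Fin.forall_fin_succ]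

variable [Fintype V] [DecidableEq V] [DecidableRel G.Adj]

theorem omegaCount_zero (x : V) : G.omegaCount 0 x = 1 := by
  simp [omegaCount, Matrix.one_apply]

theorem omegaCount_succ (i : ℕ) (x : V) :
    G.omegaCount (i + 1) x = ∑ u ∈ G.neighborFinset x, G.omegaCount i u := by
  simp only [omegaCount, pow_succ', adjMatrix_mul_apply]
  exact sum_comm

def walksFrom (i : ℕ) (x : V) : Finset (Fin (i + 1) → V) :=
  {p | G.IsWalkFun i p ∧ p 0 = x}

@[simp]
theorem mem_walksFrom {i : ℕ} {x : V} {p : Fin (i + 1) → V} :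
    p ∈ G.walksFrom i x ↔ G.IsWalkFun i p ∧ p 0 = x := by
  simp [walksFrom]

theorem card_walksFrom_zero (x : V) : #(G.walksFrom 0 x) = 1 :=
  card_eq_one.2 ⟨fun _ => x, by ext p; simp [IsWalkFun, funext_iff, Fin.forall_fin_one]⟩

-- `Fin.tail` and `Fin.cons x` identify the walks from `x` whose second vertex is `u` with the
-- walks from `u`.
theorem card_walksFrom_succ (i : ℕ) (x : V) :
    #(G.walksFrom (i + 1) x) = ∑ u ∈ G.neighborFinset x, #(G.walksFrom i u) := by
  rw [card_eq_sum_card_fiberwise (f := fun p => p 1) (t := G.neighborFinset x)]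
  · refine sum_congr rfl fun u hu => card_nbij' Fin.tail (fun q => Fin.cons x q) ?_ ?_ ?_ ?_
    · intro p hp
      induction p using Fin.consCases
      simp_all [isWalkFun_cons]
    · intro q hq
      simp_all [isWalkFun_cons]
    · intro p hp
      induction p using Fin.consCases
      simp_all
    · intro q hq
      simp
  · intro p hp
    induction p using Fin.consCases with
    | cons a q =>
      simp only [mem_coe, mem_walksFrom, isWalkFun_cons, Fin.cons_zero] at hp
      obtain ⟨⟨hadj, -⟩, rfl⟩ := hp
      simpa using hadj

theorem omegaCount_eq_card_walksFrom (i : ℕ) (x : V) :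
    G.omegaCount i x = #(G.walksFrom i x) := by
  induction i generalizing x with
  | zero => simp [omegaCount_zero, card_walksFrom_zero]
  | succ i ih => simp [omegaCount_succ, card_walksFrom_succ, ih]

theorem walkCount_eq_sum_omegaCount (i : ℕ) : (G.walkCount i : ℝ) = ∑ x, G.omegaCount i x := by
  rw [walkCount, card_eq_sum_card_fiberwise (f := fun p => p 0) (t := univ) (by simp)]
  simp [omegaCount_eq_card_walksFrom, walksFrom, filter_filter]

theorem phiCount_univ (i : ℕ) : G.phiCount i univ = G.walkCount i := by
  simp [phiCount, walkCount]

theorem omegaCount_succ_le (i : ℕ) (x : V) :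
    G.omegaCount (i + 1) x ≤ G.maxDegree * G.omegaCount i x := by
  induction i generalizing x with
  | zero => simpa [omegaCount_succ, omegaCount_zero] using G.degree_le_maxDegree x
  | succ i ih =>
    rw [omegaCount_succ, omegaCount_succ G i, mul_sum]
    exact sum_le_sum fun u _ => ih u

theorem omegaCount_add_le (i k : ℕ) (x : V) :
    G.omegaCount (i + k) x ≤ G.maxDegree ^ k * G.omegaCount i x := by
  induction k with
  | zero => simp
  | succ k ih =>
    calc G.omegaCount (i + k + 1) x ≤ G.maxDegree * G.omegaCount (i + k) x :=
          G.omegaCount_succ_le _ x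
      _ ≤ G.maxDegree * (G.maxDegree ^ k * G.omegaCount i x) := by gcongr
      _ = G.maxDegree ^ (k + 1) * G.omegaCount i x := by ring

end SimpleGraph

theorem ged_tail_combinatorial_bound_general {V : Type*} [Fintype V] [DecidableEq V]
    (G : SimpleGraph V) [DecidableRel G.Adj] (α : ℝ) (hα : 0 < α)
    (h : α * (G.maxDegree : ℝ) < 1) (ℓ : ℕ) :
    G.GEDtail α ℓ Finset.univ ≤
      α ^ (ℓ + 1) * ((G.maxDegree : ℝ) / (1 - α * (G.maxDegree : ℝ))) *
        ∑ x : V, G.omegaCount ℓ x := by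
  set Δ : ℝ := (G.maxDegree : ℝ)
  set T := ∑ x : V, G.omegaCount ℓ x
  have hterm (n : ℕ) : α ^ (ℓ + 1 + n) * (G.phiCount (ℓ + 1 + n) univ : ℝ) ≤
      α ^ (ℓ + 1) * Δ * T * (α * Δ) ^ n :=
    calc α ^ (ℓ + 1 + n) * (G.phiCount (ℓ + 1 + n) univ : ℝ)
        = α ^ (ℓ + 1 + n) * ∑ x, G.omegaCount (ℓ + (n + 1)) x := by
          rw [G.phiCount_univ, G.walkCount_eq_sum_omegaCount, ← add_assoc, add_right_comm]
      _ ≤ α ^ (ℓ + 1 + n) * (Δ ^ (n + 1) * T) := by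
          gcongr
          rw [mul_sum]
          exact sum_le_sum fun x _ => G.omegaCount_add_le ℓ (n + 1) x
      _ = α ^ (ℓ + 1) * Δ * T * (α * Δ) ^ n := by ring
  calc G.GEDtail α ℓ univ ≤ α ^ (ℓ + 1) * Δ * T / (1 - α * Δ) :=
        tsum_le_div_one_sub_of_le_geometric (fun n => by positivity) hterm (by positivity) h
    _ = _ := by ring

/-- combinatorial tail bound via the maximum degree. -/
theorem ged_tail_combinatorial_bound {V : Type*} [Fintype V] [DecidableEq V] [Nonempty V]
    (G : SimpleGraph V) [DecidableRel G.Adj] (α : ℝ) (hα : 0 < α)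
    (h : α * (G.maxDegree : ℝ) < 1) (ℓ : ℕ) (hℓ : 1 ≤ ℓ) :
    G.GEDtail α ℓ Finset.univ ≤
      α ^ (ℓ + 1) * ((G.maxDegree : ℝ) / (1 - α * (G.maxDegree : ℝ))) *
        ∑ x : V, G.omegaCount ℓ x :=
  ged_tail_combinatorial_bound_general G α hα h ℓ
end
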